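/- The metric space (Y,d) is hyperbolic; moreover, there is a constant Δ depending only on δ (and not on X₁, X₂, B₁, B₂) such that (Y,d) is Δ-hyperbolic. -/

import Mathlib

/-!
Write `h p = B₁ x₁ = B₂ x₂` for the height of `p = (x₁, x₂) ∈ Y`. In each factor
`d(x, y) = B x + B y - 2 (x|y)_B`, where the Gromov product `(x|y)_B` seen from the point at
infinity of `B` satisfies the `3δ`-ultrametric inequality of a `δ`-hyperbolic space. Hence the
maximum metric is `h p + h q - 2 min ((x₁|y₁)_{B₁}, (x₂|y₂)_{B₂})` and satisfies Gromov's
four-point condition with constant `12δ`.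

The interior metric exceeds the maximum metric by at most a constant. Both `B`-functions
have families of `B`-rays (limits of geodesics towards the ray defining `B`, by properness)
such that the rays from two points come `(2δ + 1)`-close below height `(x|y)_B - δ - 1`. So
`p` and `q` descend along rays to that height, where `p` crosses over in `X₁` and `q` in `X₂`
to a common point. The four-point condition survives this additive error, and for a geodesic
space it yields thin triangles.
-/

open Set Metric Filter
open scoped ENNReal NNReal

/-- `γ`, restricted to `[0, dist x y]`, is a unit-speed (arclength-parameterized) geodesic
segment from `x` to `y`. -/
def IsGeodSegment {X : Type*} [MetricSpace X] (γ : ℝ → X) (x y : X) : Prop :=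
  γ 0 = x ∧ γ (dist x y) = y ∧
    ∀ s ∈ Set.Icc (0 : ℝ) (dist x y), ∀ t ∈ Set.Icc (0 : ℝ) (dist x y),
      dist (γ s) (γ t) = |s - t|

/-- A metric space is geodesic if any two points are joined by a geodesic segment. -/
def GeodesicMS (X : Type*) [MetricSpace X] : Prop :=
  ∀ x y : X, ∃ γ : ℝ → X, IsGeodSegment γ x y

/-- The image (side) of a geodesic segment from `x` to `y`. -/
def segImg {X : Type*} [MetricSpace X] (γ : ℝ → X) (x y : X) : Set X :=
  γ '' Set.Icc 0 (dist x y)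

/-- `X` is `δ`-hyperbolic: each side of each geodesic triangle is contained in the closed
`δ`-neighborhood of the union of the two other sides.  (Since the vertices `x y z` and the
three sides are universally quantified, the condition for the single side `γ_{xy}` implies
it for all three sides.) -/
def DeltaHyp (X : Type*) [MetricSpace X] (δ : ℝ) : Prop :=
  ∀ (x y z : X) (gxy gxz gyz : ℝ → X),
    IsGeodSegment gxy x y → IsGeodSegment gxz x z → IsGeodSegment gyz y z →
      ∀ s ∈ Set.Icc (0 : ℝ) (dist x y),
        ∃ w ∈ segImg gxz x z ∪ segImg gyz y z, dist (gxy s) w ≤ δ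

/-- `X` is hyperbolic if it is `δ`-hyperbolic for some `δ ≥ 0`. -/
def GromovHyperbolic (X : Type*) [MetricSpace X] : Prop :=
  ∃ δ : ℝ, 0 ≤ δ ∧ DeltaHyp X δ

/-- The Gromov product `(y⬝z)_x`. -/
noncomputable def gp {X : Type*} [MetricSpace X] (y z x : X) : ℝ :=
  (dist y x + dist z x - dist y z) / 2

/-- A geodesic ray (unit-speed, defined on `[0,∞)`). -/
def IsRay {X : Type*} [MetricSpace X] (γ : ℝ → X) : Prop :=
  ∀ s ∈ Set.Ici (0 : ℝ), ∀ t ∈ Set.Ici (0 : ℝ), dist (γ s) (γ t) = |s - t|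

/-- `B` is the Busemann function associated to some geodesic ray. -/
def IsBusemann {X : Type*} [MetricSpace X] (B : X → ℝ) : Prop :=
  ∃ γ : ℝ → X, IsRay γ ∧
    ∀ x : X, Filter.Tendsto (fun t => dist x (γ t) - t) Filter.atTop (nhds (B x))

/-- `γ` is a `B`-ray: a geodesic ray along which `B` decreases with unit speed. -/
def IsBRay {X : Type*} [MetricSpace X] (B : X → ℝ) (γ : ℝ → X) : Prop :=
  IsRay γ ∧ ∀ t ∈ Set.Ici (0 : ℝ), B (γ t) = B (γ 0) - t

/-- A `T`-function on `[α,ω]`: `f t = |t - m| + k` for some `m ∈ [α,ω]` and `k ∈ ℝ`. -/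
def IsTFun (f : ℝ → ℝ) (α ω : ℝ) : Prop :=
  ∃ m ∈ Set.Icc α ω, ∃ k : ℝ, ∀ t ∈ Set.Icc α ω, f t = |t - m| + k

/-- A `δ`-`T`-function on `[α,ω]`: uniformly `δ`-close to a `T`-function. -/
def IsDeltaTFun (δ : ℝ) (f : ℝ → ℝ) (α ω : ℝ) : Prop :=
  ∃ g : ℝ → ℝ, IsTFun g α ω ∧ ∀ t ∈ Set.Icc α ω, |f t - g t| ≤ δ

/-- The interior (induced length) metric associated to the metric of `Z`: the infimum of
lengths (total variations) of continuous paths joining the two points, with value in `ℝ≥0∞`. -/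
noncomputable def intDist {Z : Type*} [MetricSpace Z] (p q : Z) : ℝ≥0∞ :=
  ⨅ (c : ℝ → Z) (_ : ContinuousOn c (Set.Icc 0 1)) (_ : c 0 = p) (_ : c 1 = q),
    eVariationOn c (Set.Icc (0 : ℝ) 1)

/-- The "Gromov product with a Busemann function": `(x'⬝B)_x = ½(d(x,x') + B(x) - B(x'))`. -/
noncomputable def gpB {X : Type*} [MetricSpace X] (B : X → ℝ) (x x' : X) : ℝ :=
  (dist x x' + B x - B x') / 2

/-- Unit-speed geodesic segment with respect to a bare distance function `D`. -/
def IsGeodSegmentD {Z : Type*} (D : Z → Z → ℝ) (γ : ℝ → Z) (x y : Z) : Prop :=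
  γ 0 = x ∧ γ (D x y) = y ∧
    ∀ s ∈ Set.Icc (0 : ℝ) (D x y), ∀ t ∈ Set.Icc (0 : ℝ) (D x y), D (γ s) (γ t) = |s - t|

/-- `δ`-hyperbolicity with respect to a bare distance function `D`. -/
def DeltaHypD {Z : Type*} (D : Z → Z → ℝ) (δ : ℝ) : Prop :=
  ∀ (x y z : Z) (gxy gxz gyz : ℝ → Z),
    IsGeodSegmentD D gxy x y → IsGeodSegmentD D gxz x z → IsGeodSegmentD D gyz y z →
      ∀ s ∈ Set.Icc (0 : ℝ) (D x y),
        ∃ w ∈ (gxz '' Set.Icc 0 (D x z)) ∪ (gyz '' Set.Icc 0 (D y z)), D (gxy s) w ≤ δ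
open Topology

section IntDist

variable {Z : Type*} [MetricSpace Z] {p q r : Z}

theorem intDist_le_eVariationOn {c : ℝ → Z} (hc : ContinuousOn c (Icc 0 1)) (h0 : c 0 = p)
    (h1 : c 1 = q) : intDist p q ≤ eVariationOn c (Icc 0 1) :=
  iInf₂_le_of_le c hc <| iInf₂_le_of_le h0 h1 le_rfl

theorem intDist_le_eVariationOn_Icc {c : ℝ → Z} {a b : ℝ} (hab : a ≤ b)
    (hc : ContinuousOn c (Icc a b)) (ha : c a = p) (hb : c b = q) :
    intDist p q ≤ eVariationOn c (Icc a b) := by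
  set φ : ℝ → ℝ := fun u => a + (b - a) * u
  have hφ : φ '' Icc 0 1 = Icc a b := by
    rw [show φ = (a + ·) ∘ ((b - a) * ·) from rfl, image_comp,
      image_mul_left_Icc (sub_nonneg.2 hab) zero_le_one, image_const_add_Icc]
    simp
  have hmono : MonotoneOn φ (Icc 0 1) := fun u _ v _ huv => by
    simp only [φ]; nlinarith [sub_nonneg.2 hab]
  calc intDist p q ≤ eVariationOn (c ∘ φ) (Icc 0 1) :=
        intDist_le_eVariationOn (hc.comp (by fun_prop) (hφ ▸ mapsTo_image φ _))
          (by simp [φ, ha]) (by simp [φ, hb])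
    _ = eVariationOn c (Icc a b) := by rw [eVariationOn.comp_eq_of_monotoneOn c φ hmono, hφ]

theorem intDist_le_of_lipschitzOnWith {c : ℝ → Z} {L : ℝ} (hL : 0 ≤ L)
    (hc : LipschitzOnWith 1 c (Icc 0 L)) (h0 : c 0 = p) (h1 : c L = q) :
    intDist p q ≤ ENNReal.ofReal L :=
  calc intDist p q ≤ eVariationOn (c ∘ id) (Icc 0 L) :=
        intDist_le_eVariationOn_Icc hL hc.continuousOn h0 h1
    _ ≤ 1 * eVariationOn id (Icc 0 L) := hc.comp_eVariationOn_le (mapsTo_id _)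
    _ = ENNReal.ofReal L := by
        rw [one_mul, ← univ_inter (Icc 0 L), monotone_id.monotoneOn _ |>.eVariationOn_eq
          (mem_univ 0) (mem_univ L)]
        simp

theorem edist_le_intDist (p q : Z) : edist p q ≤ intDist p q := by
  refine le_iInf₂ fun c _ => le_iInf₂ fun h0 h1 => ?_
  rw [← h0, ← h1]
  exact eVariationOn.edist_le c (by simp) (by simp)

theorem intDist_comm (p q : Z) : intDist p q = intDist q p := by
  suffices ∀ p q : Z, intDist q p ≤ intDist p q from le_antisymm (this q p) (this p q)
  intro p q
  refine le_iInf₂ fun c hc => le_iInf₂ fun h0 h1 => ?_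
  have hneg : Neg.neg '' Icc (-1 : ℝ) 0 = Icc 0 1 := by simp
  calc intDist q p ≤ eVariationOn (c ∘ Neg.neg) (Icc (-1) 0) :=
        intDist_le_eVariationOn_Icc (by norm_num)
          (hc.comp continuousOn_neg (hneg ▸ mapsTo_image _ _))
          (by simpa using h1) (by simpa using h0)
    _ = eVariationOn c (Icc 0 1) := by
        rw [eVariationOn.comp_eq_of_antitoneOn c _ (fun _ _ _ _ h => neg_le_neg h), hneg]

theorem intDist_le_eVariationOn_add {c₁ c₂ : ℝ → Z} (hc₁ : ContinuousOn c₁ (Icc 0 1))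
    (hc₂ : ContinuousOn c₂ (Icc 0 1)) (h0 : c₁ 0 = p) (hq : c₁ 1 = c₂ 0) (h1 : c₂ 1 = r) :
    intDist p r ≤ eVariationOn c₁ (Icc 0 1) + eVariationOn c₂ (Icc 0 1) := by
  classical
  set c : ℝ → Z := fun u => if u ≤ 1 then c₁ u else c₂ (u - 1)
  have hc₁' : EqOn c c₁ (Icc 0 1) := fun u hu => if_pos hu.2
  have hc₂' : EqOn c (c₂ ∘ (· - 1)) (Icc 1 2) := fun u hu => by
    rcases hu.1.eq_or_lt with rfl | hlt
    · simp [c, hq]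
    · simp [c, not_le.2 hlt]
  have hshift : (· - 1) '' Icc (1 : ℝ) 2 = Icc 0 1 := by norm_num [image_sub_const_Icc]
  have hcont : ContinuousOn c (Icc 0 2) := by
    rw [← Icc_union_Icc_eq_Icc zero_le_one one_le_two]
    exact (hc₁.congr hc₁').union_of_isClosed
      ((hc₂.comp (by fun_prop) (hshift ▸ mapsTo_image _ _)).congr hc₂') isClosed_Icc isClosed_Icc
  calc intDist p r ≤ eVariationOn c (Icc 0 2) :=
        intDist_le_eVariationOn_Icc zero_le_two hcont (by simp [c, h0]) (by norm_num [c, h1])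
    _ = eVariationOn c (Icc 0 1) + eVariationOn c (Icc 1 2) := by
        simpa using (eVariationOn.Icc_add_Icc c zero_le_one one_le_two (mem_univ 1)).symm
    _ = eVariationOn c₁ (Icc 0 1) + eVariationOn c₂ (Icc 0 1) := by
        rw [eVariationOn.eq_of_eqOn hc₁', eVariationOn.eq_of_eqOn hc₂',
          eVariationOn.comp_eq_of_monotoneOn c₂ _ (fun u _ v _ h => by simpa using h), hshift]

theorem intDist_triangle (p q r : Z) : intDist p r ≤ intDist p q + intDist q r := by
  conv_rhs => rw [intDist, intDist]
  simp only [ENNReal.iInf_add, ENNReal.add_iInf]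
  refine le_iInf₂ fun c₁ hc₁ => le_iInf₂ fun h₁0 h₁1 => ?_
  refine le_iInf₂ fun c₂ hc₂ => le_iInf₂ fun h₂0 h₂1 => ?_
  exact intDist_le_eVariationOn_add hc₂ hc₁ h₂0 (h₂1.trans h₁0.symm) h₁1

theorem LipschitzWith.intDist_map_le {W : Type*} [MetricSpace W] {f : Z → W}
    (hf : LipschitzWith 1 f) (p q : Z) : intDist (f p) (f q) ≤ intDist p q := by
  refine le_iInf₂ fun c hc => le_iInf₂ fun h0 h1 => ?_
  calc intDist (f p) (f q) ≤ eVariationOn (f ∘ c) (Icc 0 1) :=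
        intDist_le_eVariationOn (hf.continuous.comp_continuousOn hc) (by simp [h0]) (by simp [h1])
    _ ≤ 1 * eVariationOn c (Icc 0 1) := hf.lipschitzOnWith.comp_eVariationOn_le (mapsTo_univ _ _)
    _ = eVariationOn c (Icc 0 1) := one_mul _

end IntDist

section Geodesic

variable {X : Type*} [MetricSpace X] {γ : ℝ → X} {x y : X} {r : ℝ}

theorem LipschitzWith.abs_sub_le {f : X → ℝ} (hf : LipschitzWith 1 f) (x y : X) :
    |f x - f y| ≤ dist x y := by
  simpa [Real.dist_eq] using hf.dist_le_mul x y

theorem IsGeodSegment.dist_left (h : IsGeodSegment γ x y) (hr : r ∈ Icc 0 (dist x y)) :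
    dist x (γ r) = r := by
  rw [← h.1, h.2.2 0 ⟨le_rfl, dist_nonneg⟩ r hr, zero_sub, abs_neg, abs_of_nonneg hr.1]

theorem IsGeodSegment.dist_right (h : IsGeodSegment γ x y) (hr : r ∈ Icc 0 (dist x y)) :
    dist (γ r) y = dist x y - r := by
  conv_lhs => rw [← h.2.1]
  rw [h.2.2 r hr _ ⟨dist_nonneg, le_rfl⟩, abs_of_nonpos (by linarith [hr.2]), neg_sub]

theorem IsGeodSegment.lipschitzOnWith (h : IsGeodSegment γ x y) :
    LipschitzOnWith 1 γ (Icc 0 (dist x y)) :=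
  LipschitzOnWith.mk_one fun s hs t ht => by rw [h.2.2 s hs t ht, Real.dist_eq]

theorem IsGeodSegment.reverse (h : IsGeodSegment γ x y) :
    IsGeodSegment (fun t => γ (dist x y - t)) y x := by
  refine ⟨by simpa using h.2.1, by simpa [dist_comm y x] using h.1, fun s hs t ht => ?_⟩
  rw [dist_comm y x] at hs ht
  rw [h.2.2 _ ⟨by linarith [hs.2], by linarith [hs.1]⟩ _ ⟨by linarith [ht.2], by linarith [ht.1]⟩,
    abs_sub_comm]
  ring_nf

theorem segImg_reverse : segImg (fun t => γ (dist x y - t)) y x = segImg γ x y := by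
  rw [segImg, segImg, dist_comm y x, show (fun t => γ (dist x y - t)) = γ ∘ (dist x y - ·) from rfl,
    image_comp, image_const_sub_Icc]
  simp

theorem IsGeodSegment.abs_two_mul_sub_le {f : X → ℝ} (hf : LipschitzWith 1 f)
    (h : IsGeodSegment γ x y) {v : X} (hv : v ∈ segImg γ x y) :
    |2 * f v - (f x + f y)| ≤ dist x y := by
  obtain ⟨r, hr, rfl⟩ := hv
  have h₁ := abs_le.1 (hf.abs_sub_le x (γ r))
  have h₂ := abs_le.1 (hf.abs_sub_le (γ r) y)
  rw [h.dist_left hr] at h₁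
  rw [h.dist_right hr] at h₂
  exact abs_le.2 ⟨by linarith, by linarith⟩

theorem IsRay.lipschitzOnWith (h : IsRay γ) : LipschitzOnWith 1 γ (Ici 0) :=
  LipschitzOnWith.mk_one fun s hs t ht => by rw [h s hs t ht, Real.dist_eq]

end Geodesic

section Hyperbolic

variable {X : Type*} [MetricSpace X] {δ : ℝ}

theorem gp_le_dist_of_mem_segImg {γ : ℝ → X} {x y : X} (h : IsGeodSegment γ x y) (w : X)
    {v : X} (hv : v ∈ segImg γ x y) : gp x y w ≤ dist w v := by
  have := abs_le.1 (h.abs_two_mul_sub_le (LipschitzWith.dist_right w) hv)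
  simp only [gp, dist_comm x w, dist_comm y w]
  linarith

theorem dist_add_dist_of_mem_segImg {γ : ℝ → X} {x y v : X} (h : IsGeodSegment γ x y)
    (hv : v ∈ segImg γ x y) : dist x v + dist v y = dist x y := by
  obtain ⟨r, hr, rfl⟩ := hv
  rw [h.dist_left hr, h.dist_right hr]
  ring

variable (hgeo : GeodesicMS X) (hhyp : DeltaHyp X δ)
include hgeo hhyp

theorem exists_mem_segImg_dist_le_gp {γ : ℝ → X} {x z : X} (hγ : IsGeodSegment γ x z) (w : X) :
    ∃ u ∈ segImg γ x z, dist w u ≤ gp x z w + 2 * δ := by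
  -- `u` is the internal point of the tripod `x z w` on the side `[x, z]`.
  set s := gp w z x with hsdef
  have hs2 : 2 * s = dist w x + dist z x - dist w z := by rw [hsdef, gp]; ring
  have hs : s ∈ Icc 0 (dist x z) :=
    ⟨by linarith [dist_triangle w x z, dist_comm x z],
      by linarith [dist_triangle w z x, dist_comm x z, dist_comm z x]⟩
  obtain ⟨gxw, hgxw⟩ := hgeo x w
  obtain ⟨gzw, hgzw⟩ := hgeo z w
  obtain ⟨v, hv, hdv⟩ := hhyp x z w γ gxw gzw hγ hgxw hgzw s hs
  refine ⟨γ s, mem_image_of_mem γ hs, ?_⟩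
  have hxu := hγ.dist_left hs
  have hzu := hγ.dist_right hs
  have hwu := dist_triangle w v (γ s)
  rw [dist_comm v, dist_comm w v] at hwu
  rw [gp]
  rcases hv with hv | hv
  · have := dist_add_dist_of_mem_segImg hgxw hv
    linarith [dist_triangle x v (γ s), dist_comm v (γ s), dist_comm w x, dist_comm z x,
      dist_comm w z]
  · have := dist_add_dist_of_mem_segImg hgzw hv
    linarith [dist_triangle z v (γ s), dist_comm v (γ s), dist_comm w x, dist_comm z x,
      dist_comm w z, dist_comm z (γ s)]

theorem gp_min_sub_le (w x y z : X) : min (gp x y w) (gp y z w) - 3 * δ ≤ gp x z w := by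
  obtain ⟨g, hg⟩ := hgeo x z
  obtain ⟨u, ⟨r, hr, rfl⟩, hwu⟩ := exists_mem_segImg_dist_le_gp hgeo hhyp hg w
  obtain ⟨gxy, hgxy⟩ := hgeo x y
  obtain ⟨gzy, hgzy⟩ := hgeo z y
  obtain ⟨v, hv, hdv⟩ := hhyp x z y g gxy gzy hg hgxy hgzy r hr
  have hwv := dist_triangle w (g r) v
  rcases hv with hv | hv
  · linarith [gp_le_dist_of_mem_segImg hgxy w hv, min_le_left (gp x y w) (gp y z w)]
  · have := gp_le_dist_of_mem_segImg hgzy w hv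
    rw [show gp z y w = gp y z w by rw [gp, gp, dist_comm z y, add_comm (dist z w)]] at this
    linarith [min_le_right (gp x y w) (gp y z w)]

end Hyperbolic

/-- The Gromov product of `x` and `y` seen from the endpoint of the ray defining `B`: it is the
limit of `gp x y (γ t) - t` along that ray `γ`. -/
noncomputable def gpInf {X : Type*} [MetricSpace X] (B : X → ℝ) (x y : X) : ℝ :=
  (B x + B y - dist x y) / 2

section Busemann

variable {X : Type*} [MetricSpace X] {B : X → ℝ} {δ : ℝ}

theorem gpInf_comm (B : X → ℝ) (x y : X) : gpInf B x y = gpInf B y x := by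
  rw [gpInf, gpInf, dist_comm, add_comm (B x)]

theorem IsBusemann.lipschitzWith (hB : IsBusemann B) : LipschitzWith 1 B := by
  obtain ⟨γ, -, hlim⟩ := hB
  refine LipschitzWith.of_le_add fun x y =>
    le_of_tendsto_of_tendsto' (hlim x) ((hlim y).add_const (dist x y)) fun t => ?_
  linarith [dist_triangle x y (γ t)]

theorem IsBusemann.gpInf_le (hB : IsBusemann B) (x y : X) : gpInf B x y ≤ B x := by
  have := abs_le.1 (hB.lipschitzWith.abs_sub_le y x)
  rw [gpInf, dist_comm]
  linarith

theorem IsBusemann.gpInf_min_sub_le (hB : IsBusemann B) (hgeo : GeodesicMS X)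
    (hhyp : DeltaHyp X δ) (x y z : X) :
    min (gpInf B x y) (gpInf B y z) - 3 * δ ≤ gpInf B x z := by
  obtain ⟨γ, -, hlim⟩ := hB
  have hgp : ∀ x y, Tendsto (fun t => gp x y (γ t) - t) atTop (𝓝 (gpInf B x y)) := fun x y =>
    ((((hlim x).add (hlim y)).sub_const (dist x y)).div_const 2).congr fun t => by
      simp only [gp]; ring
  refine le_of_tendsto_of_tendsto' (((hgp x y).min (hgp y z)).sub_const _) (hgp x z) fun t => ?_
  rw [min_sub_sub_right]
  linarith [gp_min_sub_le hgeo hhyp (γ t) x y z]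

theorem IsRay.busemann_le {γ : ℝ → X} (hγ : IsRay γ)
    (hlim : ∀ x, Tendsto (fun t => dist x (γ t) - t) atTop (𝓝 (B x))) (z : X) {c : ℝ}
    (hc : 0 ≤ c) : B z ≤ dist z (γ c) - c := by
  refine le_of_tendsto (hlim z) ?_
  filter_upwards [eventually_ge_atTop c] with t ht
  have := hγ c hc t (hc.trans ht)
  rw [abs_of_nonpos (by linarith)] at this
  linarith [dist_triangle z (γ c) (γ t)]

section Approximation

variable (hB : LipschitzWith 1 B) {o : X} {c : ℝ} (hle : ∀ z, B z ≤ dist z o - c)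
include hB hle

theorem IsGeodSegment.busemann_mem_Icc {g : ℝ → X} {x : X} (hg : IsGeodSegment g x o) {r : ℝ}
    (hr : r ∈ Icc 0 (dist x o)) : B (g r) ∈ Icc (B x - r) (dist x o - c - r) := by
  have := abs_le.1 (hB.abs_sub_le x (g r))
  rw [hg.dist_left hr] at this
  have := hle (g r)
  rw [hg.dist_right hr] at this
  exact ⟨by linarith, by linarith⟩

theorem IsGeodSegment.dist_le_of_busemann_approx (hhyp : DeltaHyp X δ) {x y : X}
    {gx gy gxy : ℝ → X} (hgx : IsGeodSegment gx x o) (hgy : IsGeodSegment gy y o)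
    (hgxy : IsGeodSegment gxy x y) (hx : dist x o - c ≤ B x + 1 / 2)
    (hy : dist y o - c ≤ B y + 1 / 2) {H : ℝ} (hH : H ≤ gpInf B x y - (δ + 1))
    (hsx : B x - H ∈ Icc 0 (dist x o)) (hsy : B y - H ∈ Icc 0 (dist y o)) :
    dist (gx (B x - H)) (gy (B y - H)) ≤ 2 * δ + 1 := by
  obtain ⟨w, hw, hpw⟩ := hhyp x o y gx gxy _ hgx hgxy hgy.reverse _ hsx
  have hp := hgx.busemann_mem_Icc hB hle hsx
  have hBpw := abs_le.1 (hB.abs_sub_le (gx (B x - H)) w)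
  rcases hw with hw | hw
  · -- a point of `[x, y]` has height at least `gpInf B x y`, too high to be that close
    have := abs_le.1 (hgxy.abs_two_mul_sub_le hB hw)
    rw [gpInf] at hH
    linarith [hp.2]
  · rw [segImg_reverse] at hw
    obtain ⟨r, hr, rfl⟩ := hw
    have hw := hgy.busemann_mem_Icc hB hle hr
    have hrt : dist (gy r) (gy (B y - H)) ≤ δ + 1 / 2 := by
      rw [hgy.2.2 r hr _ hsy]
      exact abs_le.2 ⟨by linarith [hw.1, hp.2], by linarith [hw.2, hp.1]⟩
    linarith [dist_triangle (gx (B x - H)) (gy r) (gy (B y - H))]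

end Approximation

structure IsAsymptoticBRays (B : X → ℝ) (δ : ℝ) (σ : X → ℝ → X) : Prop where
  apply_zero : ∀ x, σ x 0 = x
  isBRay : ∀ x, IsBRay B (σ x)
  dist_le : ∀ x y H, H ≤ gpInf B x y - (δ + 1) → dist (σ x (B x - H)) (σ y (B y - H)) ≤ 2 * δ + 1

theorem exists_tendsto_isGeodSegment [ProperSpace X] (hgeo : GeodesicMS X) {γ : ℝ → X}
    (𝒰 : Ultrafilter ℝ) (hfar : ∀ x, Tendsto (fun n => dist x (γ n)) 𝒰 atTop) :
    ∃ (g : X → X → ℝ → X) (σ : X → ℝ → X), (∀ x y, IsGeodSegment (g x y) x y) ∧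
      (∀ x t, 0 ≤ t → Tendsto (fun n => g x (γ n) t) 𝒰 (𝓝 (σ x t))) ∧
      ∀ x, σ x 0 = x ∧ IsRay (σ x) := by
  choose g hg using hgeo
  have hfar' : ∀ x {t : ℝ}, 0 ≤ t → ∀ᶠ n in (𝒰 : Filter ℝ), t ∈ Icc 0 (dist x (γ n)) :=
    fun x t ht => (hfar x).eventually_ge_atTop t |>.mono fun _ hn => ⟨ht, hn⟩
  have hex : ∀ x t, ∃ y, 0 ≤ t → Tendsto (fun n => g x (γ n) t) 𝒰 (𝓝 y) := by
    intro x t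
    by_cases ht : 0 ≤ t
    · obtain ⟨y, -, hy⟩ := (isCompact_closedBall x t).ultrafilter_le_nhds'
        (𝒰.map fun n => g x (γ n) t) <| Ultrafilter.mem_map.2 <| (hfar' x ht).mono fun n hn => by
          rw [mem_closedBall, dist_comm, (hg x (γ n)).dist_left hn]
      exact ⟨y, fun _ => by simpa [Tendsto] using hy⟩
    · exact ⟨x, fun h => absurd h ht⟩
  choose σ hσ using hex
  refine ⟨g, σ, hg, hσ, fun x => ⟨?_, fun s hs t ht => ?_⟩⟩
  · exact tendsto_nhds_unique (hσ x 0 le_rfl)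
      (tendsto_const_nhds.congr fun n => (hg x (γ n)).1.symm)
  · refine tendsto_nhds_unique ((hσ x s hs).dist (hσ x t ht)) (tendsto_const_nhds.congr' ?_)
    filter_upwards [hfar' x hs, hfar' x ht] with n hns hnt
    exact ((hg x (γ n)).2.2 s hns t hnt).symm

theorem IsBusemann.exists_isAsymptoticBRays [ProperSpace X] (hδ : 0 ≤ δ) (hgeo : GeodesicMS X)
    (hhyp : DeltaHyp X δ) (hB : IsBusemann B) : ∃ σ, IsAsymptoticBRays B δ σ := by
  have hBlip := hB.lipschitzWith
  have hgpInf := hB.gpInf_le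
  obtain ⟨γ, hγ, hlim⟩ := hB
  set 𝒰 := Ultrafilter.of (atTop : Filter ℝ)
  have hU : (𝒰 : Filter ℝ) ≤ atTop := Ultrafilter.of_le _
  have hdist : ∀ x, Tendsto (fun n => dist x (γ n)) atTop atTop := fun x =>
    ((hlim x).add_atTop tendsto_id).congr fun n => sub_add_cancel _ _
  -- `σ x` is a limit of geodesics from `x` to `γ n` along an ultrafilter finer than `atTop`
  obtain ⟨g, σ, hg, hσ, hσray⟩ :=
    exists_tendsto_isGeodSegment hgeo 𝒰 fun x => (hdist x).mono_left hU
  have hfar : ∀ x {t : ℝ}, 0 ≤ t → ∀ᶠ n in (𝒰 : Filter ℝ), t ∈ Icc 0 (dist x (γ n)) :=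
    fun x t ht => hU <| (hdist x).eventually_ge_atTop t |>.mono fun _ hn => ⟨ht, hn⟩
  have hle : ∀ᶠ n in (𝒰 : Filter ℝ), ∀ z, B z ≤ dist z (γ n) - n :=
    hU <| (eventually_ge_atTop 0).mono fun n hn z => hγ.busemann_le hlim z hn
  have happ : ∀ x, ∀ᶠ n in (𝒰 : Filter ℝ), dist x (γ n) - n ≤ B x + 1 / 2 := fun x =>
    hU <| (hlim x).eventually (eventually_le_nhds (by linarith))
  refine ⟨σ, fun x => (hσray x).1, fun x => ⟨(hσray x).2, fun t ht => ?_⟩, fun x y H hH => ?_⟩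
  · have hBσ := (hBlip.continuous.tendsto _).comp (hσ x t ht)
    rw [(hσray x).1]
    have hmem : ∀ᶠ n in (𝒰 : Filter ℝ),
        B (g x (γ n) t) ∈ Icc (B x - t) (dist x (γ n) - n - t) := by
      filter_upwards [hfar x ht, hle] with n hn hlen
      exact (hg x (γ n)).busemann_mem_Icc hBlip hlen hn
    exact le_antisymm (le_of_tendsto_of_tendsto hBσ (((hlim x).sub_const t).mono_left hU)
      (hmem.mono fun _ h => h.2)) (ge_of_tendsto hBσ (hmem.mono fun _ h => h.1))
  · have hsx : 0 ≤ B x - H := by linarith [hgpInf x y]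
    have hsy : 0 ≤ B y - H := by linarith [hgpInf y x, gpInf_comm B x y]
    refine le_of_tendsto ((hσ x _ hsx).dist (hσ y _ hsy)) ?_
    filter_upwards [hfar x hsx, hfar y hsy, hle, happ x, happ y] with n hnx hny hlen hx hy
    exact (hg x (γ n)).dist_le_of_busemann_approx hBlip hlen hhyp (hg y (γ n)) (hg x y) hx hy hH
      hnx hny

end Busemann

section FourPoint

variable {Z : Type*} {D : Z → Z → ℝ}

def FourPointCondition (D : Z → Z → ℝ) (C : ℝ) : Prop :=
  ∀ p q r s, D p q + D r s ≤ max (D p r + D q s) (D p s + D q r) + C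

noncomputable def gpD (D : Z → Z → ℝ) (y z x : Z) : ℝ :=
  (D y x + D z x - D y z) / 2

theorem min_add_min_sub_le {a b c d x y ε : ℝ} (h₁ : min a d - ε ≤ x) (h₂ : min b c - ε ≤ x)
    (h₃ : min a c - ε ≤ y) (h₄ : min b d - ε ≤ y) : min (a + b) (c + d) - 2 * ε ≤ x + y := by
  rcases min_choice a d with h5 | h5 <;> rcases min_choice b c with h6 | h6 <;>
    rcases min_choice a c with h7 | h7 <;> rcases min_choice b d with h8 | h8 <;>
    linarith [min_le_left a d, min_le_right a d, min_le_left b c, min_le_right b c,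
      min_le_left a c, min_le_right a c, min_le_left b d, min_le_right b d,
      min_le_left (a + b) (c + d), min_le_right (a + b) (c + d)]

theorem fourPointCondition_of_min_sub_le {K : Z → Z → ℝ} {h : Z → ℝ} {ε : ℝ}
    (hD : ∀ p q, D p q = h p + h q - 2 * K p q) (hK : ∀ a b, K a b = K b a)
    (hKmin : ∀ a b c, min (K a b) (K b c) - ε ≤ K a c) : FourPointCondition D (4 * ε) := by
  intro p q r s
  have key := min_add_min_sub_le (a := K p r) (b := K q s) (c := K p s) (d := K q r)
    (by simpa [hK r q] using hKmin p r q) (by simpa [hK s q, min_comm] using hKmin p s q)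
    (by simpa [hK r p] using hKmin r p s) (by simpa [hK r q, min_comm] using hKmin r q s)
  have h₁ := le_max_left (D p r + D q s) (D p s + D q r)
  have h₂ := le_max_right (D p r + D q s) (D p s + D q r)
  simp only [hD] at h₁ h₂ ⊢
  rcases le_total (K p r + K q s) (K p s + K q r) with hc | hc
  · rw [min_eq_left hc] at key
    linarith
  · rw [min_eq_right hc] at key
    linarith

theorem FourPointCondition.of_le_of_le_add {D' : Z → Z → ℝ} {C C' : ℝ}
    (h : FourPointCondition D C) (hlow : ∀ p q, D p q ≤ D' p q)
    (hup : ∀ p q, D' p q ≤ D p q + C') : FourPointCondition D' (C + 2 * C') := by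
  intro p q r s
  have := max_le_max (add_le_add (hlow p r) (hlow q s)) (add_le_add (hlow p s) (hlow q r))
  linarith [h p q r s, hup p q, hup r s]

theorem IsGeodSegmentD.eq_left {γ : ℝ → Z} {x y : Z} (h : IsGeodSegmentD D γ x y) {r : ℝ}
    (hr : r ∈ Icc 0 (D x y)) : D x (γ r) = r := by
  rw [← h.1, h.2.2 0 ⟨le_rfl, hr.1.trans hr.2⟩ r hr, zero_sub, abs_neg, abs_of_nonneg hr.1]

theorem IsGeodSegmentD.eq_right {γ : ℝ → Z} {x y : Z} (h : IsGeodSegmentD D γ x y) {r : ℝ}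
    (hr : r ∈ Icc 0 (D x y)) : D (γ r) y = D x y - r := by
  conv_lhs => rw [← h.2.1]
  rw [h.2.2 r hr _ ⟨hr.1.trans hr.2, le_rfl⟩, abs_of_nonpos (by linarith [hr.2]), neg_sub]

variable (hsymm : ∀ p q, D p q = D q p)
include hsymm

theorem FourPointCondition.gpD_min_sub_le {C : ℝ} (h : FourPointCondition D C) (w u m v : Z) :
    min (gpD D u m w) (gpD D m v w) - C / 2 ≤ gpD D u v w := by
  have := h u v m w
  rcases le_total (D u m + D v w) (D u w + D v m) with hc | hc
  · rw [max_eq_right hc] at this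
    refine (sub_le_sub_right (min_le_right _ _) _).trans ?_
    simp only [gpD]
    linarith [hsymm v m]
  · rw [max_eq_left hc] at this
    refine (sub_le_sub_right (min_le_left _ _) _).trans ?_
    simp only [gpD]
    linarith

variable {ε : ℝ} (hε : ∀ w u m v, min (gpD D u m w) (gpD D m v w) - ε ≤ gpD D u v w)
include hε

theorem le_four_mul_of_le_gpD {x y z p q : Z} {s : ℝ} (hp : D x p = s) (hq : D x q = s)
    (hpy : s ≤ gpD D p y x) (hyz : s ≤ gpD D y z x) (hzq : s ≤ gpD D z q x) : D p q ≤ 4 * ε := by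
  have hε0 : 0 ≤ ε := by linarith [min_self (gpD D x x x) ▸ hε x x x x]
  have h₁ : s - ε ≤ gpD D p z x := (sub_le_sub_right (le_min hpy hyz) ε).trans (hε x p y z)
  have h₂ : s - ε - ε ≤ gpD D p q x :=
    (sub_le_sub_right (le_min h₁ (by linarith)) ε).trans (hε x p z q)
  rw [gpD, hsymm p x, hsymm q x, hp, hq] at h₂
  linarith

theorem deltaHypD_of_gpD_min_sub_le (htri : ∀ p q r, D p r ≤ D p q + D q r) :
    DeltaHypD D (4 * ε) := by
  intro x y z gxy gxz gyz hxy hxz hyz s hs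
  have hxp := hxy.eq_left hs
  have hpy := hxy.eq_right hs
  rcases le_total s (gpD D y z x) with hsyz | hsyz
  · have hsxz : s ∈ Icc 0 (D x z) :=
      ⟨hs.1, hsyz.trans (by rw [gpD]; linarith [htri y z x, hsymm x z])⟩
    refine ⟨gxz s, Or.inl (mem_image_of_mem _ hsxz),
      le_four_mul_of_le_gpD hsymm hε hxp (hxz.eq_left hsxz) ?_ hsyz ?_⟩
    · rw [gpD]
      linarith [hsymm (gxy s) x, hsymm y x]
    · rw [gpD]
      linarith [hsymm (gxz s) x, hsymm z x, hsymm z (gxz s), hxz.eq_left hsxz, hxz.eq_right hsxz]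
  · set s' := D x y - s
    have hs' : s' ≤ gpD D x z y := by
      simp only [gpD] at hsyz ⊢
      linarith [hsymm y x, hsymm z x, hsymm z y]
    have hsyz' : s' ∈ Icc 0 (D y z) :=
      ⟨by linarith [hs.2], hs'.trans (by rw [gpD]; linarith [htri x z y, hsymm z y])⟩
    refine ⟨gyz s', Or.inr (mem_image_of_mem _ hsyz'),
      le_four_mul_of_le_gpD hsymm hε (x := y) (by rw [hsymm, hpy]) (hyz.eq_left hsyz') ?_ hs' ?_⟩
    · rw [gpD]
      linarith [hsymm (gxy s) x]
    · rw [gpD]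
      linarith [hsymm (gyz s') y, hsymm z y, hsymm z (gyz s'), hyz.eq_left hsyz',
        hyz.eq_right hsyz']

end FourPoint

theorem FourPointCondition.deltaHypD {Z : Type*} {D : Z → Z → ℝ} {C : ℝ}
    (h : FourPointCondition D C) (hsymm : ∀ p q, D p q = D q p)
    (htri : ∀ p q r, D p r ≤ D p q + D q r) : DeltaHypD D (2 * C) := by
  convert deltaHypD_of_gpD_min_sub_le hsymm (h.gpD_min_sub_le hsymm) htri using 1
  ring

section BRay

variable {X : Type*} [MetricSpace X] {B : X → ℝ} {σ : ℝ → X} {x : X}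

theorem IsBRay.busemann_apply_sub (hσ : IsBRay B σ) (h0 : σ 0 = x) {H : ℝ} (hH : H ≤ B x) :
    B (σ (B x - H)) = H := by
  rw [hσ.2 _ (sub_nonneg.2 hH), h0]
  ring

theorem IsAsymptoticBRays.busemann_apply_sub {δ : ℝ} {σ : X → ℝ → X}
    (hσ : IsAsymptoticBRays B δ σ) {H : ℝ} (hH : H ≤ B x) : B (σ x (B x - H)) = H :=
  (hσ.isBRay x).busemann_apply_sub (hσ.apply_zero x) hH

theorem IsBRay.lift (hσ : IsBRay B σ) (h0 : σ 0 = x) {f : ℝ → ℝ} {s : Set ℝ}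
    (hf : LipschitzOnWith 1 f s) (hfs : ∀ t ∈ s, f t ≤ B x) :
    LipschitzOnWith 1 (fun t => σ (B x - f t)) s ∧ ∀ t ∈ s, B (σ (B x - f t)) = f t := by
  have hmaps : ∀ t ∈ s, 0 ≤ B x - f t := fun t ht => sub_nonneg.2 (hfs t ht)
  refine ⟨LipschitzOnWith.mk_one fun u hu v hv => ?_, fun t ht => ?_⟩
  · rw [hσ.1 _ (hmaps u hu) _ (hmaps v hv), sub_sub_sub_cancel_left, abs_sub_comm]
    simpa [Real.dist_eq] using hf.dist_le_mul u hu v hv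
  · rw [hσ.2 _ (hmaps t ht), h0]
    ring

end BRay

abbrev HorosphericalProduct {X₁ X₂ : Type*} (B₁ : X₁ → ℝ) (B₂ : X₂ → ℝ) : Type _ :=
  {r : X₁ × X₂ // B₁ r.1 = B₂ r.2}

namespace HorosphericalProduct

variable {X₁ X₂ : Type*} {B₁ : X₁ → ℝ} {B₂ : X₂ → ℝ}

def swap (p : HorosphericalProduct B₁ B₂) : HorosphericalProduct B₂ B₁ :=
  ⟨p.1.swap, p.2.symm⟩

theorem swap_swap (p : HorosphericalProduct B₁ B₂) : swap (swap p) = p := rfl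

variable [MetricSpace X₁] [MetricSpace X₂] {δ : ℝ}

theorem dist_eq (p q : HorosphericalProduct B₁ B₂) :
    dist p q = B₁ p.1.1 + B₁ q.1.1 - 2 * min (gpInf B₁ p.1.1 q.1.1) (gpInf B₂ p.1.2 q.1.2) := by
  have h₁ : dist p.1.1 q.1.1 = B₁ p.1.1 + B₁ q.1.1 - 2 * gpInf B₁ p.1.1 q.1.1 := by
    rw [gpInf]; ring
  have h₂ : dist p.1.2 q.1.2 = B₁ p.1.1 + B₁ q.1.1 - 2 * gpInf B₂ p.1.2 q.1.2 := by
    rw [gpInf, p.2, q.2]; ring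
  rw [Subtype.dist_eq, Prod.dist_eq, h₁, h₂]
  rcases le_total (gpInf B₁ p.1.1 q.1.1) (gpInf B₂ p.1.2 q.1.2) with hc | hc
  · rw [min_eq_left hc, max_eq_left (by linarith)]
  · rw [min_eq_right hc, max_eq_right (by linarith)]

theorem fourPointCondition (hgeo₁ : GeodesicMS X₁) (hgeo₂ : GeodesicMS X₂)
    (hhyp₁ : DeltaHyp X₁ δ) (hhyp₂ : DeltaHyp X₂ δ) (hB₁ : IsBusemann B₁) (hB₂ : IsBusemann B₂) :
    FourPointCondition (dist : HorosphericalProduct B₁ B₂ → _ → ℝ) (4 * (3 * δ)) := by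
  refine fourPointCondition_of_min_sub_le dist_eq
    (fun p q => by rw [gpInf_comm B₁, gpInf_comm B₂]) fun a b c => le_min ?_ ?_
  · linarith [hB₁.gpInf_min_sub_le hgeo₁ hhyp₁ a.1.1 b.1.1 c.1.1,
      min_le_min (min_le_left (gpInf B₁ a.1.1 b.1.1) (gpInf B₂ a.1.2 b.1.2))
        (min_le_left (gpInf B₁ b.1.1 c.1.1) (gpInf B₂ b.1.2 c.1.2))]
  · linarith [hB₂.gpInf_min_sub_le hgeo₂ hhyp₂ a.1.2 b.1.2 c.1.2,
      min_le_min (min_le_right (gpInf B₁ a.1.1 b.1.1) (gpInf B₂ a.1.2 b.1.2))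
        (min_le_right (gpInf B₁ b.1.1 c.1.1) (gpInf B₂ b.1.2 c.1.2))]

theorem intDist_le_of_lipschitzOnWith {c₁ : ℝ → X₁} {c₂ : ℝ → X₂} {L : ℝ} (hL : 0 ≤ L)
    (h₁ : LipschitzOnWith 1 c₁ (Icc 0 L)) (h₂ : LipschitzOnWith 1 c₂ (Icc 0 L))
    (hB : ∀ t ∈ Icc 0 L, B₁ (c₁ t) = B₂ (c₂ t)) {p q : HorosphericalProduct B₁ B₂}
    (hp : p.1 = (c₁ 0, c₂ 0)) (hq : q.1 = (c₁ L, c₂ L)) : intDist p q ≤ ENNReal.ofReal L := by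
  classical
  let c : ℝ → HorosphericalProduct B₁ B₂ := fun t =>
    if ht : t ∈ Icc 0 L then ⟨(c₁ t, c₂ t), hB t ht⟩ else p
  have hc : ∀ t (ht : t ∈ Icc 0 L), c t = ⟨(c₁ t, c₂ t), hB t ht⟩ := fun t ht => dif_pos ht
  refine _root_.intDist_le_of_lipschitzOnWith (c := c) hL
    (LipschitzOnWith.mk_one fun s hs t ht => ?_) ?_ ?_
  · rw [hc s hs, hc t ht, Subtype.dist_eq, Prod.dist_eq]
    exact max_le (by simpa using h₁.dist_le_mul s hs t ht) (by simpa using h₂.dist_le_mul s hs t ht)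
  · rw [hc 0 ⟨le_rfl, hL⟩]
    exact Subtype.ext hp.symm
  · rw [hc L ⟨hL, le_rfl⟩]
    exact Subtype.ext hq.symm

theorem intDist_le_of_isBRay {σ₁ : ℝ → X₁} {σ₂ : ℝ → X₂} (hσ₁ : IsBRay B₁ σ₁)
    (hσ₂ : IsBRay B₂ σ₂) {p q : HorosphericalProduct B₁ B₂} (hp : p.1 = (σ₁ 0, σ₂ 0)) {a : ℝ}
    (ha : 0 ≤ a) (hq : q.1 = (σ₁ a, σ₂ a)) : intDist p q ≤ ENNReal.ofReal a := by
  have h0 : B₁ (σ₁ 0) = B₂ (σ₂ 0) := by simpa [hp] using p.2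
  refine intDist_le_of_lipschitzOnWith ha (hσ₁.1.lipschitzOnWith.mono Icc_subset_Ici_self)
    (hσ₂.1.lipschitzOnWith.mono Icc_subset_Ici_self) (fun t ht => ?_) hp hq
  rw [hσ₁.2 t ht.1, hσ₂.2 t ht.1, h0]

theorem intDist_le_of_isGeodSegment (hB₁ : LipschitzWith 1 B₁) {g : ℝ → X₁} {a b : X₁}
    (hg : IsGeodSegment g a b) {H : ℝ} (ha : B₁ a = H) (hb : B₁ b = H) {σ : ℝ → X₂}
    (hσ : IsBRay B₂ σ) {z : X₂} (h0 : σ 0 = z) (hz : H + dist a b / 2 ≤ B₂ z)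
    {p q : HorosphericalProduct B₁ B₂} (hp : p.1 = (a, σ (B₂ z - H)))
    (hq : q.1 = (b, σ (B₂ z - H))) : intDist p q ≤ ENNReal.ofReal (dist a b) := by
  obtain ⟨hlip, hval⟩ := hσ.lift h0 (f := B₁ ∘ g)
    (by simpa only [mul_one] using hB₁.comp_lipschitzOnWith hg.lipschitzOnWith) fun t ht => by
      have := abs_le.1 (hg.abs_two_mul_sub_le hB₁ (mem_image_of_mem g ht))
      simp only [Function.comp_apply]
      linarith
  exact intDist_le_of_lipschitzOnWith dist_nonneg hg.lipschitzOnWith hlip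
    (fun t ht => (hval t ht).symm) (by simp [hp, hg.1, ha]) (by simp [hq, hg.2.1, hb])

theorem lipschitzWith_swap :
    LipschitzWith 1 (swap : HorosphericalProduct B₁ B₂ → HorosphericalProduct B₂ B₁) :=
  LipschitzWith.mk_one fun p q => by
    rw [Subtype.dist_eq, Subtype.dist_eq, Prod.dist_eq, Prod.dist_eq, max_comm]
    rfl

theorem intDist_swap (p q : HorosphericalProduct B₁ B₂) :
    intDist (swap p) (swap q) = intDist p q := by
  refine le_antisymm (lipschitzWith_swap.intDist_map_le p q) ?_
  simpa only [swap_swap] using lipschitzWith_swap.intDist_map_le (swap p) (swap q)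

theorem intDist_le_of_isAsymptoticBRays (hδ : 0 ≤ δ) (hgeo₁ : GeodesicMS X₁)
    (hB₁ : IsBusemann B₁) {σ₁ : X₁ → ℝ → X₁} {σ₂ : X₂ → ℝ → X₂}
    (hσ₁ : IsAsymptoticBRays B₁ δ σ₁) (hσ₂ : IsAsymptoticBRays B₂ δ σ₂)
    {p q : HorosphericalProduct B₁ B₂} {x₁ y₁ : X₁} {x₂ : X₂} (hp : p.1 = (x₁, x₂)) {H : ℝ}
    (hH : H ≤ gpInf B₁ x₁ y₁ - (δ + 1)) (hq : q.1 = (σ₁ y₁ (B₁ y₁ - H), σ₂ x₂ (B₂ x₂ - H))) :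
    intDist p q ≤ ENNReal.ofReal (B₁ x₁ - H + (2 * δ + 1)) := by
  have hx : B₁ x₁ = B₂ x₂ := by simpa [hp] using p.2
  have hHx : H + (δ + 1) ≤ B₁ x₁ := by linarith [hB₁.gpInf_le x₁ y₁]
  have hHy : H ≤ B₁ y₁ := by linarith [hB₁.gpInf_le y₁ x₁, gpInf_comm B₁ x₁ y₁]
  let m : HorosphericalProduct B₁ B₂ := ⟨(σ₁ x₁ (B₁ x₁ - H), σ₂ x₂ (B₂ x₂ - H)), by
    rw [hσ₁.busemann_apply_sub (by linarith), hσ₂.busemann_apply_sub (by linarith)]⟩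
  obtain ⟨g, hg⟩ := hgeo₁ (σ₁ x₁ (B₁ x₁ - H)) (σ₁ y₁ (B₁ y₁ - H))
  have hL := hσ₁.dist_le x₁ y₁ H hH
  calc intDist p q ≤ intDist p m + intDist m q := intDist_triangle _ _ _
    _ ≤ ENNReal.ofReal (B₁ x₁ - H) + ENNReal.ofReal (2 * δ + 1) := by
        gcongr
        · exact intDist_le_of_isBRay (hσ₁.isBRay x₁) (hσ₂.isBRay x₂)
            (by simp [hp, hσ₁.apply_zero, hσ₂.apply_zero]) (by linarith) (by simp [m, hx])
        · refine (intDist_le_of_isGeodSegment hB₁.lipschitzWith hg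
            (hσ₁.busemann_apply_sub (by linarith)) (hσ₁.busemann_apply_sub hHy) (hσ₂.isBRay x₂)
            (hσ₂.apply_zero x₂) (by linarith) rfl hq).trans (ENNReal.ofReal_le_ofReal hL)
    _ = ENNReal.ofReal (B₁ x₁ - H + (2 * δ + 1)) :=
        (ENNReal.ofReal_add (by linarith) (by linarith)).symm

theorem intDist_le_dist_add [ProperSpace X₁] [ProperSpace X₂] (hδ : 0 ≤ δ)
    (hgeo₁ : GeodesicMS X₁) (hgeo₂ : GeodesicMS X₂) (hhyp₁ : DeltaHyp X₁ δ)
    (hhyp₂ : DeltaHyp X₂ δ) (hB₁ : IsBusemann B₁) (hB₂ : IsBusemann B₂)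
    (p q : HorosphericalProduct B₁ B₂) :
    intDist p q ≤ ENNReal.ofReal (dist p q + (6 * δ + 4)) := by
  obtain ⟨σ₁, hσ₁⟩ := hB₁.exists_isAsymptoticBRays hδ hgeo₁ hhyp₁
  obtain ⟨σ₂, hσ₂⟩ := hB₂.exists_isAsymptoticBRays hδ hgeo₂ hhyp₂
  obtain ⟨x₁, x₂, hpx⟩ : ∃ x₁ x₂, p.1 = (x₁, x₂) := ⟨_, _, rfl⟩
  obtain ⟨y₁, y₂, hqy⟩ : ∃ y₁ y₂, q.1 = (y₁, y₂) := ⟨_, _, rfl⟩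
  have hx : B₁ x₁ = B₂ x₂ := by simpa [hpx] using p.2
  have hy : B₁ y₁ = B₂ y₂ := by simpa [hqy] using q.2
  obtain ⟨H, hH⟩ : ∃ H, H = min (gpInf B₁ x₁ y₁) (gpInf B₂ x₂ y₂) - (δ + 1) := ⟨_, rfl⟩
  have hH₁ : H ≤ gpInf B₁ x₁ y₁ - (δ + 1) := by
    linarith [min_le_left (gpInf B₁ x₁ y₁) (gpInf B₂ x₂ y₂)]
  have hH₂ : H ≤ gpInf B₂ y₂ x₂ - (δ + 1) := by
    linarith [min_le_right (gpInf B₁ x₁ y₁) (gpInf B₂ x₂ y₂), gpInf_comm B₂ x₂ y₂]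
  have hx₁ := hB₁.gpInf_le x₁ y₁
  have hy₂ := hB₂.gpInf_le y₂ x₂
  -- `p` and `q` are joined through the point where their descents cross over
  let m : HorosphericalProduct B₁ B₂ := ⟨(σ₁ y₁ (B₁ y₁ - H), σ₂ x₂ (B₂ x₂ - H)), by
    rw [hσ₁.busemann_apply_sub (by linarith), hσ₂.busemann_apply_sub (by linarith)]⟩
  have hpm := intDist_le_of_isAsymptoticBRays hδ hgeo₁ hB₁ hσ₁ hσ₂ hpx hH₁ (q := m) rfl
  have hqm : intDist q m ≤ ENNReal.ofReal (B₂ y₂ - H + (2 * δ + 1)) := by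
    rw [← intDist_swap]
    exact intDist_le_of_isAsymptoticBRays hδ hgeo₂ hB₂ hσ₂ hσ₁ (by simp [swap, hqy]) hH₂ rfl
  calc intDist p q ≤ intDist p m + intDist m q := intDist_triangle _ _ _
    _ ≤ ENNReal.ofReal (B₁ x₁ - H + (2 * δ + 1)) + ENNReal.ofReal (B₂ y₂ - H + (2 * δ + 1)) :=
        add_le_add hpm (intDist_comm m q ▸ hqm)
    _ = ENNReal.ofReal (B₁ x₁ - H + (2 * δ + 1) + (B₂ y₂ - H + (2 * δ + 1))) :=
        (ENNReal.ofReal_add (by linarith) (by linarith)).symm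
    _ ≤ ENNReal.ofReal (dist p q + (6 * δ + 4)) := by
        refine ENNReal.ofReal_le_ofReal ?_
        rw [dist_eq, hpx, hqy]
        linarith

end HorosphericalProduct

/-- Proposition 3: `(Y,d)` is hyperbolic; moreover there is a constant `Δ ≥ 0` depending
only on `δ` (and not on `X₁, X₂, B₁, B₂`) such that `(Y,d)` is `Δ`-hyperbolic, where `d`
is the interior metric on `Y` induced by the maximum metric (in particular `d` is finite). -/
theorem stmt17 (δ : ℝ) (hδ : 0 ≤ δ) :
    ∃ Δ : ℝ, 0 ≤ Δ ∧
      ∀ (X₁ X₂ : Type*) [MetricSpace X₁] [MetricSpace X₂]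
        [ProperSpace X₁] [ProperSpace X₂],
        GeodesicMS X₁ → GeodesicMS X₂ → DeltaHyp X₁ δ → DeltaHyp X₂ δ →
        ∀ (B₁ : X₁ → ℝ) (B₂ : X₂ → ℝ), IsBusemann B₁ → IsBusemann B₂ →
          (∀ p q : {r : X₁ × X₂ // B₁ r.1 = B₂ r.2}, intDist p q ≠ ⊤) ∧
          DeltaHypD
            (fun p q : {r : X₁ × X₂ // B₁ r.1 = B₂ r.2} => (intDist p q).toReal) Δ := by
  refine ⟨2 * (4 * (3 * δ) + 2 * (6 * δ + 4)), by positivity, ?_⟩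
  intro X₁ X₂ _ _ _ _ hgeo₁ hgeo₂ hhyp₁ hhyp₂ B₁ B₂ hB₁ hB₂
  have hup := HorosphericalProduct.intDist_le_dist_add hδ hgeo₁ hgeo₂ hhyp₁ hhyp₂ hB₁ hB₂
  have hfin : ∀ p q : HorosphericalProduct B₁ B₂, intDist p q ≠ ⊤ := fun p q =>
    ne_top_of_le_ne_top ENNReal.ofReal_ne_top (hup p q)
  refine ⟨hfin, FourPointCondition.deltaHypD ?_ (fun p q => by rw [intDist_comm]) fun p q r => ?_⟩
  · refine (HorosphericalProduct.fourPointCondition hgeo₁ hgeo₂ hhyp₁ hhyp₂ hB₁ hB₂).of_le_of_le_add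
      (fun p q => ?_) fun p q => ENNReal.toReal_le_of_le_ofReal (by positivity) (hup p q)
    rw [dist_edist]
    exact ENNReal.toReal_mono (hfin p q) (edist_le_intDist p q)
  · rw [← ENNReal.toReal_add (hfin p q) (hfin q r)]
    exact ENNReal.toReal_mono (ENNReal.add_ne_top.2 ⟨hfin p q, hfin q r⟩) (intDist_triangle p q r)
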